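/- arXiv:1104.0327 — 3 statements merged into one kernel-verified Lean document; each statement's English description precedes it below -/
import Mathlib

section
/- Let Φ̄, α, β be independent random variables with α, β ≥ 0 bounded (β ≤ β_max a.s.), E[β] − E[α] = ε > 0, Var(α) = σ², Var(β) = ν², and suppose Φ̄ ≥ 0 has all moments finite and is a stationary point of the recursion, i.e. Φ̄' = (Φ̄ + α − β)⁺ has the same distribution as Φ̄. Let χ = Φ̄' − (Φ̄ + α − β). Then ε·E[Φ̄] = E[(α−β)²]/2 − E[χ²]/2, E[χ] = ε, and consequently E[Φ̄] ≥ (σ² + ν² + ε²)/(2ε) − β_max/2. -/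
/-!
Write `D = Φ + (α - β)`, so that `Φ' = D⁺` and `χ = D⁻`. Stationarity gives `E[Φ'] = E[Φ]`,
i.e. `E[χ] = -E[α - β] = ε`, and `E[Φ'²] = E[Φ²]`: the quadratic Lyapunov function has zero
drift. Since `D⁺ D⁻ = 0` we have `D² = Φ'² + χ²`, and expanding `E[D²]` with `Φ` independent of
`α - β` turns this into `E[χ²] = E[(α - β)²] - 2 ε E[Φ]`. Finally `χ` is nonzero only when the
queue empties, and then `χ ≤ β ≤ β_max`, so `E[χ²] ≤ β_max E[χ] = β_max ε`, while independence of
`α` and `β` gives `E[(α - β)²] = σ² + ν² + ε²`.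
-/

open MeasureTheory ProbabilityTheory

lemma sq_max_zero_sub_self (x : ℝ) : (max x 0 - x) ^ 2 = x ^ 2 - max x 0 ^ 2 := by
  rcases le_total 0 x with h | h <;> simp [h]

lemma sq_max_zero_sub_le_mul {x y c : ℝ} (hx : 0 ≤ x) (hy : -c ≤ y) :
    (max (x + y) 0 - (x + y)) ^ 2 ≤ c * (max (x + y) 0 - (x + y)) := by
  rcases le_total 0 (x + y) with h | h
  · simp [h]
  · rw [max_eq_right h]; nlinarith

namespace ProbabilityTheory

variable {Ω : Type*} [MeasurableSpace Ω] {μ : Measure Ω} {X Y : Ω → ℝ}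

lemma _root_.MeasureTheory.memLp_of_ae_nonneg_of_ae_le [IsFiniteMeasure μ] {C : ℝ}
    {p : ENNReal} (hX : AEStronglyMeasurable X μ) (h0 : ∀ᵐ ω ∂μ, 0 ≤ X ω)
    (hC : ∀ᵐ ω ∂μ, X ω ≤ C) : MemLp X p μ :=
  .of_bound hX C <| by filter_upwards [h0, hC] with ω h0 hC; rwa [Real.norm_of_nonneg h0]

lemma IndepFun.integral_add_sq (h : IndepFun X Y μ) (hX : MemLp X 2 μ) (hY : MemLp Y 2 μ) :
    ∫ ω, (X ω + Y ω) ^ 2 ∂μ = ∫ ω, X ω ^ 2 ∂μ + 2 * (μ[X] * μ[Y]) + ∫ ω, Y ω ^ 2 ∂μ := by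
  have hXY : Integrable (fun ω ↦ 2 * (X ω * Y ω)) μ := (hX.integrable_mul hY).const_mul 2
  calc ∫ ω, (X ω + Y ω) ^ 2 ∂μ = ∫ ω, (X ω ^ 2 + 2 * (X ω * Y ω) + Y ω ^ 2) ∂μ := by
        congr with ω; ring
    _ = _ := by
      rw [integral_add (f := fun ω ↦ X ω ^ 2 + 2 * (X ω * Y ω)) (hX.integrable_sq.add hXY)
        hY.integrable_sq, integral_add hX.integrable_sq hXY, integral_const_mul,
        h.integral_fun_mul_eq_mul_integral hX.1 hY.1]

lemma IndepFun.integral_sub_sq [IsProbabilityMeasure μ] (h : IndepFun X Y μ) (hX : MemLp X 2 μ)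
    (hY : MemLp Y 2 μ) :
    ∫ ω, (X ω - Y ω) ^ 2 ∂μ = Var[X; μ] + Var[Y; μ] + (μ[X] - μ[Y]) ^ 2 := by
  have h_var := variance_eq_sub (hX.sub hY)
  simp only [Pi.pow_apply, Pi.sub_apply] at h_var
  rw [variance_sub hX hY, h.covariance_eq_zero hX hY,
    integral_sub (hX.integrable one_le_two) (hY.integrable one_le_two)] at h_var
  linarith

lemma integral_max_zero_sub_of_identDistrib
    (hstat : IdentDistrib (fun ω ↦ max (X ω + Y ω) 0) X μ μ)
    (hX : Integrable X μ) (hY : Integrable Y μ) :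
    ∫ ω, (max (X ω + Y ω) 0 - (X ω + Y ω)) ∂μ = -μ[Y] := by
  rw [integral_sub (g := fun ω ↦ X ω + Y ω) (hstat.integrable_iff.2 hX) (hX.add hY),
    hstat.integral_eq, integral_add hX hY]
  ring

lemma integral_sq_max_zero_sub_of_identDistrib
    (hstat : IdentDistrib (fun ω ↦ max (X ω + Y ω) 0) X μ μ) (hXY : IndepFun X Y μ)
    (hX : MemLp X 2 μ) (hY : MemLp Y 2 μ) :
    ∫ ω, (max (X ω + Y ω) 0 - (X ω + Y ω)) ^ 2 ∂μ = ∫ ω, Y ω ^ 2 ∂μ + 2 * (μ[X] * μ[Y]) := by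
  simp_rw [sq_max_zero_sub_self]
  rw [integral_sub (f := fun ω ↦ (X ω + Y ω) ^ 2) (hX.add hY).integrable_sq
      (hstat.sq.integrable_iff.2 hX.integrable_sq), hstat.sq.integral_eq, hXY.integral_add_sq hX hY]
  ring

lemma integral_sq_max_zero_sub_le_mul_integral [IsFiniteMeasure μ] {c : ℝ}
    (hstat : IdentDistrib (fun ω ↦ max (X ω + Y ω) 0) X μ μ)
    (hX : MemLp X 2 μ) (hY : MemLp Y 2 μ) (hX_nonneg : ∀ᵐ ω ∂μ, 0 ≤ X ω)
    (hY_ge : ∀ᵐ ω ∂μ, -c ≤ Y ω) :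
    ∫ ω, (max (X ω + Y ω) 0 - (X ω + Y ω)) ^ 2 ∂μ ≤
      c * ∫ ω, (max (X ω + Y ω) 0 - (X ω + Y ω)) ∂μ := by
  have hχ : MemLp (fun ω ↦ max (X ω + Y ω) 0 - (X ω + Y ω)) 2 μ :=
    (hstat.memLp_iff.2 hX).sub (hX.add hY)
  rw [← integral_const_mul]
  refine integral_mono_ae hχ.integrable_sq ((hχ.integrable one_le_two).const_mul c) ?_
  filter_upwards [hX_nonneg, hY_ge] with ω hXω hYω using sq_max_zero_sub_le_mul hXω hYω

end ProbabilityTheory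

theorem single_server_steady_state_lower_bound
    {Ω : Type*} [MeasurableSpace Ω] (μ : Measure Ω) [IsProbabilityMeasure μ]
    (Φ α β : Ω → ℝ) (ε σ2 ν2 αmax βmax : ℝ)
    (hmΦ : Measurable Φ) (hmα : Measurable α) (hmβ : Measurable β)
    (hindep : iIndepFun ![Φ, α, β] μ)
    (hα_nonneg : ∀ᵐ ω ∂μ, 0 ≤ α ω) (hβ_nonneg : ∀ᵐ ω ∂μ, 0 ≤ β ω)
    (hα_bdd : ∀ᵐ ω ∂μ, α ω ≤ αmax) (hβ_bdd : ∀ᵐ ω ∂μ, β ω ≤ βmax)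
    (hΦ_nonneg : ∀ᵐ ω ∂μ, 0 ≤ Φ ω)
    (hε : (∫ ω, β ω ∂μ) - (∫ ω, α ω ∂μ) = ε) (hε_pos : 0 < ε)
    (hvarα : variance α μ = σ2) (hvarβ : variance β μ = ν2)
    (hmoments : ∀ n : ℕ, Integrable (fun ω => (Φ ω) ^ n) μ)
    (hstat : IdentDistrib (fun ω => max (Φ ω + α ω - β ω) 0) Φ μ μ) :
    ε * (∫ ω, Φ ω ∂μ) =
        (∫ ω, (α ω - β ω) ^ 2 ∂μ) / 2 -
          (∫ ω, (max (Φ ω + α ω - β ω) 0 - (Φ ω + α ω - β ω)) ^ 2 ∂μ) / 2 ∧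
      (∫ ω, (max (Φ ω + α ω - β ω) 0 - (Φ ω + α ω - β ω)) ∂μ) = ε ∧
      (σ2 + ν2 + ε ^ 2) / (2 * ε) - βmax / 2 ≤ ∫ ω, Φ ω ∂μ := by
  have hΦ : MemLp Φ 2 μ := (memLp_two_iff_integrable_sq hmΦ.aestronglyMeasurable).2 (hmoments 2)
  have hα : MemLp α 2 μ := memLp_of_ae_nonneg_of_ae_le hmα.aestronglyMeasurable hα_nonneg hα_bdd
  have hβ : MemLp β 2 μ := memLp_of_ae_nonneg_of_ae_le hmβ.aestronglyMeasurable hβ_nonneg hβ_bdd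
  have hΦ_αβ : IndepFun Φ (α - β) μ :=
    hindep.indepFun_sub_right (fun i ↦ by fin_cases i <;> assumption) 0 1 2 (by decide) (by decide)
  have hαβ : IndepFun α β μ := by simpa using hindep.indepFun (i := 1) (j := 2) (by decide)
  have hstat' : IdentDistrib (fun ω ↦ max (Φ ω + (α - β) ω) 0) Φ μ μ := by
    simpa only [Pi.sub_apply, add_sub_assoc] using hstat
  have h_drift : ∫ ω, (α ω - β ω) ∂μ = -ε := by
    rw [integral_sub (hα.integrable one_le_two) (hβ.integrable one_le_two)]; linarith
  have h_mean_χ := integral_max_zero_sub_of_identDistrib hstat' (hΦ.integrable one_le_two)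
    ((hα.sub hβ).integrable one_le_two)
  have h_sq_χ := integral_sq_max_zero_sub_of_identDistrib hstat' hΦ_αβ hΦ (hα.sub hβ)
  have h_αβ_ge : ∀ᵐ ω ∂μ, -βmax ≤ (α - β) ω := by
    filter_upwards [hα_nonneg, hβ_bdd] with ω hαω hβω
    simp only [Pi.sub_apply]; linarith
  have h_χ_le :=
    integral_sq_max_zero_sub_le_mul_integral hstat' hΦ (hα.sub hβ) hΦ_nonneg h_αβ_ge
  simp only [Pi.sub_apply, ← add_sub_assoc, h_drift, neg_neg] at h_mean_χ h_sq_χ h_χ_le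
  have h_sq_αβ : ∫ ω, (α ω - β ω) ^ 2 ∂μ = σ2 + ν2 + ε ^ 2 := by
    rw [hαβ.integral_sub_sq hα hβ, hvarα, hvarβ, ← hε]; ring
  refine ⟨by linarith, h_mean_χ, ?_⟩
  rw [h_mean_χ] at h_χ_le
  rw [sub_le_iff_le_add, div_le_iff₀ (by positivity)]
  linarith
end

section
/- Let Q ∈ ℝ₊^L with Q ≠ 0, let λ ∈ ℝ^L with λ_l > δ > 0 for all l, and let Q_min = min_l Q_l. Then λ_Σ·Q_min − ⟨Q, λ⟩ ≤ −δ·‖Q − (Q_Σ/L)·1‖, where λ_Σ = Σ_l λ_l, Q_Σ = Σ_l Q_l, and 1 is the all-ones vector. -/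
/-!
With `m = min_l Q_l`, the left side is `-∑ λ_l (Q_l - m) ≤ -δ ‖Q - m·1‖₁`. The ℓ¹ norm dominates the
Euclidean norm, and among the vectors `Q - c·1` the Euclidean norm is smallest at the mean
`c = Q_Σ / L`, since `Q - (Q_Σ / L)·1` is orthogonal to `1`.
-/

open scoped RealInnerProductSpace
open Finset

namespace EuclideanSpace

variable {ι : Type*} [Fintype ι]

theorem norm_le_sum_norm {𝕜 : Type*} [RCLike 𝕜] (x : EuclideanSpace 𝕜 ι) :
    ‖x‖ ≤ ∑ i, ‖x i‖ := by
  rw [EuclideanSpace.norm_eq, Real.sqrt_le_iff]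
  exact ⟨by positivity, sum_sq_le_sq_sum_of_nonneg fun i _ ↦ norm_nonneg (x i)⟩

theorem inner_const_right (x : EuclideanSpace ℝ ι) (c : ℝ) :
    ⟪x, WithLp.toLp 2 (fun _ ↦ c)⟫ = c * ∑ i, x i := by
  simp [PiLp.inner_apply, mul_sum]

theorem norm_sub_const_mean_le [Nonempty ι] (x : EuclideanSpace ℝ ι) (c : ℝ) :
    ‖x - WithLp.toLp 2 (fun _ ↦ (∑ i, x i) / Fintype.card ι)‖ ≤
      ‖x - WithLp.toLp 2 (fun _ ↦ c)‖ := by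
  set μ := (∑ i, x i) / Fintype.card ι
  have hsplit : x - WithLp.toLp 2 (fun _ ↦ c) =
      (x - WithLp.toLp 2 (fun _ ↦ μ)) + WithLp.toLp 2 (fun _ ↦ μ - c) := by
    ext i; simp
  have horth : ⟪x - WithLp.toLp 2 (fun _ ↦ μ), WithLp.toLp 2 (fun _ ↦ μ - c)⟫ = 0 := by
    rw [inner_sub_left, inner_const_right, inner_const_right, sum_const, card_univ, nsmul_eq_mul]
    field_simp
    ring
  rw [hsplit, mul_self_le_mul_self_iff (norm_nonneg _) (norm_nonneg _),
    norm_add_sq_eq_norm_sq_add_norm_sq_real horth]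
  exact le_add_of_nonneg_right (mul_self_nonneg _)

theorem sum_mul_sub_inner_le_neg_mul_sum_sub (Q lam : EuclideanSpace ℝ ι) {m δ : ℝ}
    (hm : ∀ i, m ≤ Q i) (hlam : ∀ i, δ ≤ lam i) :
    (∑ i, lam i) * m - ⟪Q, lam⟫ ≤ -δ * ∑ i, (Q i - m) := by
  have hinner : ⟪Q, lam⟫ = ∑ i, lam i * Q i := by simp [PiLp.inner_apply]
  calc (∑ i, lam i) * m - ⟪Q, lam⟫ = -∑ i, lam i * (Q i - m) := by
        simp only [hinner, mul_sub, sum_sub_distrib, sum_mul]; ring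
    _ ≤ -∑ i, δ * (Q i - m) :=
        neg_le_neg <| sum_le_sum fun i _ ↦ mul_le_mul_of_nonneg_right (hlam i) (sub_nonneg.2 (hm i))
    _ = -δ * ∑ i, (Q i - m) := by rw [neg_mul, mul_sum]

end EuclideanSpace

theorem jsq_collapse_key_inequality_general {L : ℕ} [NeZero L]
    (Q lam : EuclideanSpace ℝ (Fin L)) (δ : ℝ)
    (hδ_pos : 0 < δ) (hlam : ∀ l, δ < lam l) :
    (∑ l, lam l) * (Finset.univ.inf' Finset.univ_nonempty Q) - ⟪Q, lam⟫ ≤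
      -δ * ‖Q - (WithLp.equiv 2 (Fin L → ℝ)).symm (fun _ => (∑ l, Q l) / L)‖ := by
  set m := Finset.univ.inf' Finset.univ_nonempty Q
  have hm : ∀ l, m ≤ Q l := fun l ↦ inf'_le _ (mem_univ l)
  have hgap_l1 :
      ∑ l, (Q l - m) = ∑ l, ‖(Q - WithLp.toLp 2 (fun _ ↦ m) : EuclideanSpace ℝ (Fin L)) l‖ :=
    sum_congr rfl fun l _ ↦ by simp [abs_of_nonneg (sub_nonneg.2 (hm l))]
  have hmean := EuclideanSpace.norm_sub_const_mean_le Q m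
  rw [Fintype.card_fin] at hmean
  calc (∑ l, lam l) * m - ⟪Q, lam⟫ ≤ -δ * ∑ l, (Q l - m) :=
        EuclideanSpace.sum_mul_sub_inner_le_neg_mul_sum_sub Q lam hm fun l ↦ (hlam l).le
    _ ≤ -δ * ‖Q - WithLp.toLp 2 (fun _ ↦ m)‖ := by
        rw [hgap_l1]
        exact mul_le_mul_of_nonpos_left (EuclideanSpace.norm_le_sum_norm _) (by linarith)
    _ ≤ _ := mul_le_mul_of_nonpos_left hmean (by linarith)

theorem jsq_collapse_key_inequality {L : ℕ} [NeZero L]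
    (Q lam : EuclideanSpace ℝ (Fin L)) (δ : ℝ)
    (hQ_nonneg : ∀ l, 0 ≤ Q l) (hQ_ne : Q ≠ 0)
    (hδ_pos : 0 < δ) (hlam : ∀ l, δ < lam l) :
    (∑ l, lam l) * (Finset.univ.inf' Finset.univ_nonempty Q) - ⟪Q, lam⟫ ≤
      -δ * ‖Q - (WithLp.equiv 2 (Fin L → ℝ)).symm (fun _ => (∑ l, Q l) / L)‖ :=
  jsq_collapse_key_inequality_general Q lam δ hδ_pos hlam
end

section
/- Let c ∈ ℝ^L be a nonnegative unit vector and let Q⁺, U ∈ ℝ₊^L satisfy Q⁺_l U_l = 0 for all l, with U_l ≤ S_max for all l. For random vectors Q⁺, U with finite second moments and Q⁺⊥ = Q⁺ − ⟨c,Q⁺⟩c, one has E[⟨c, Q⁺⟩⟨c, U⟩] ≤ √( E[‖Q⁺⊥‖²] · E[‖U‖²] ). -/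
/-! Complementary slackness makes `Q⁺` orthogonal to `U`, so `⟪c, Q⁺⟫ ⟪c, U⟫ = ⟪-Q⁺⊥, U⟫`.
Cauchy–Schwarz, first pointwise in `ℝ^L` and then in `L²(μ)`, gives the bound. -/

open MeasureTheory
open scoped RealInnerProductSpace

section CauchySchwarz

variable {Ω : Type*} [MeasurableSpace Ω] {μ : Measure Ω}

theorem integral_mul_le_sqrt_integral_sq_mul_integral_sq {f g : Ω → ℝ}
    (hf_nonneg : 0 ≤ᵐ[μ] f) (hg_nonneg : 0 ≤ᵐ[μ] g) (hf : MemLp f 2 μ) (hg : MemLp g 2 μ) :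
    ∫ ω, f ω * g ω ∂μ ≤ √((∫ ω, f ω ^ 2 ∂μ) * ∫ ω, g ω ^ 2 ∂μ) := by
  have holder := integral_mul_le_Lp_mul_Lq_of_nonneg Real.HolderConjugate.two_two
    hf_nonneg hg_nonneg (by simpa using hf) (by simpa using hg)
  simp only [Real.rpow_two] at holder
  rwa [Real.sqrt_mul (integral_nonneg fun ω => sq_nonneg (f ω)), Real.sqrt_eq_rpow,
    Real.sqrt_eq_rpow]

theorem memLp_two_norm_of_integrable_norm_sq {E : Type*} [NormedAddCommGroup E] {X : Ω → E}
    (hX : Integrable (fun ω => ‖X ω‖ ^ 2) μ) : MemLp (fun ω => ‖X ω‖) 2 μ := by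
  have hmeas : AEStronglyMeasurable (fun ω => ‖X ω‖) μ := by
    refine (Real.continuous_sqrt.comp_aestronglyMeasurable hX.aestronglyMeasurable).congr ?_
    filter_upwards with ω
    exact Real.sqrt_sq (norm_nonneg _)
  exact (memLp_two_iff_integrable_sq hmeas).2 hX

end CauchySchwarz

theorem EuclideanSpace.inner_eq_zero_of_forall_mul_eq_zero {ι : Type*} [Fintype ι]
    {x y : EuclideanSpace ℝ ι} (h : ∀ i, x i * y i = 0) : ⟪x, y⟫ = 0 := by
  simp only [PiLp.inner_apply, RCLike.inner_apply, conj_trivial]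
  exact Finset.sum_eq_zero fun i _ => (mul_comm _ _).trans (h i)

section OrthogonalPart

variable {E : Type*} [NormedAddCommGroup E] [InnerProductSpace ℝ E]

theorem inner_mul_inner_eq_neg_inner_sub_smul_of_inner_eq_zero {c x y : E} (h : ⟪x, y⟫ = 0) :
    ⟪c, x⟫ * ⟪c, y⟫ = ⟪-(x - ⟪c, x⟫ • c), y⟫ := by
  rw [inner_neg_left, inner_sub_left, real_inner_smul_left, h]
  ring

theorem inner_mul_inner_le_norm_sub_smul_mul_norm_of_inner_eq_zero {c x y : E}
    (h : ⟪x, y⟫ = 0) : ⟪c, x⟫ * ⟪c, y⟫ ≤ ‖x - ⟪c, x⟫ • c‖ * ‖y‖ := by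
  rw [inner_mul_inner_eq_neg_inner_sub_smul_of_inner_eq_zero h, ← norm_neg (x - _)]
  exact real_inner_le_norm _ _

end OrthogonalPart

theorem unused_service_cross_term_bound_general {L : ℕ}
    {Ω : Type*} [MeasurableSpace Ω] (μ : Measure Ω)
    (Qp U : Ω → EuclideanSpace ℝ (Fin L)) (c : EuclideanSpace ℝ (Fin L))
    (hslack : ∀ ω, ∀ l, Qp ω l * U ω l = 0)
    (hint1 : Integrable (fun ω => ‖Qp ω - ⟪c, Qp ω⟫ • c‖ ^ 2) μ)
    (hint2 : Integrable (fun ω => ‖U ω‖ ^ 2) μ)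
    (hint3 : Integrable (fun ω => ⟪c, Qp ω⟫ * ⟪c, U ω⟫) μ) :
    (∫ ω, ⟪c, Qp ω⟫ * ⟪c, U ω⟫ ∂μ) ≤
      Real.sqrt ((∫ ω, ‖Qp ω - ⟪c, Qp ω⟫ • c‖ ^ 2 ∂μ) * ∫ ω, ‖U ω‖ ^ 2 ∂μ) := by
  have hQp_perp := memLp_two_norm_of_integrable_norm_sq hint1
  have hU := memLp_two_norm_of_integrable_norm_sq hint2
  calc (∫ ω, ⟪c, Qp ω⟫ * ⟪c, U ω⟫ ∂μ)
      ≤ ∫ ω, ‖Qp ω - ⟪c, Qp ω⟫ • c‖ * ‖U ω‖ ∂μ :=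
        integral_mono hint3 (hQp_perp.integrable_mul hU) fun ω =>
          inner_mul_inner_le_norm_sub_smul_mul_norm_of_inner_eq_zero
            (EuclideanSpace.inner_eq_zero_of_forall_mul_eq_zero (hslack ω))
    _ ≤ _ := integral_mul_le_sqrt_integral_sq_mul_integral_sq
        (.of_forall fun _ => norm_nonneg _) (.of_forall fun _ => norm_nonneg _) hQp_perp hU

theorem unused_service_cross_term_bound {L : ℕ}
    {Ω : Type*} [MeasurableSpace Ω] (μ : Measure Ω) [IsProbabilityMeasure μ]
    (Qp U : Ω → EuclideanSpace ℝ (Fin L)) (c : EuclideanSpace ℝ (Fin L)) (Smax : ℝ)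
    (hc_nonneg : ∀ l, 0 ≤ c l) (hc_norm : ‖c‖ = 1)
    (hQp_nonneg : ∀ ω, ∀ l, 0 ≤ Qp ω l) (hU_nonneg : ∀ ω, ∀ l, 0 ≤ U ω l)
    (hU_bdd : ∀ ω, ∀ l, U ω l ≤ Smax)
    (hslack : ∀ ω, ∀ l, Qp ω l * U ω l = 0)
    (hint1 : Integrable (fun ω => ‖Qp ω - ⟪c, Qp ω⟫ • c‖ ^ 2) μ)
    (hint2 : Integrable (fun ω => ‖U ω‖ ^ 2) μ)
    (hint3 : Integrable (fun ω => ⟪c, Qp ω⟫ * ⟪c, U ω⟫) μ) :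
    (∫ ω, ⟪c, Qp ω⟫ * ⟪c, U ω⟫ ∂μ) ≤
      Real.sqrt ((∫ ω, ‖Qp ω - ⟪c, Qp ω⟫ • c‖ ^ 2 ∂μ) * ∫ ω, ‖U ω‖ ^ 2 ∂μ) :=
  unused_service_cross_term_bound_general μ Qp U c hslack hint1 hint2 hint3
end
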